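/- arXiv:2105.12389 — 2 statements merged into one kernel-verified Lean document; each statement's English description precedes it below -/
import Mathlib

section
/- Let Û* be an optimal solution of min over U ∈ S^d_+ of J(U), let U_r be a feasible solution of the rank-constrained problem (i.e., U_r ∈ S^d_+ with ⟨U_r,I⟩ − ‖U_r‖_(r) = 0), and let ε > 0. If the penalty parameter c satisfies (J(U_r) − J(Û*))/c ≤ ε, then any global minimizer U*_c of J(U) + c(⟨U,I⟩ − ‖U‖_(r)) over S^d_+ satisfies ⟨U*_c, I⟩ − ‖U*_c‖_(r) ≤ ε and J(U*_c) ≤ J(U*) where U* is a global optimal solution of the rank-constrained problem. -/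
open Matrix

noncomputable def kyFan {d : ℕ} (r : ℕ) (U : Matrix (Fin d) (Fin d) ℝ) : ℝ :=
  if hU : U.IsHermitian then
    sSup {x | ∃ s : Finset (Fin d), s.card = r ∧ x = ∑ i ∈ s, |hU.eigenvalues i|}
  else 0

/-!
The penalty `⟨U,I⟩ - ‖U‖_(r)` is nonnegative on `S^d_+`, because the trace of a positive
semidefinite matrix is the sum of all its (nonnegative) eigenvalues while the Ky-Fan norm sums only
`r` of them. Comparing the penalized minimizer `U*_c` with the feasible point `U_r` bounds
`c · penalty(U*_c)` by `J(U_r) - J(U*_c) ≤ J(U_r) - J(Û*)`; comparing it with `U*` gives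
`J(U*_c) ≤ J(U*_c) + c · penalty(U*_c) ≤ J(U*)`.
-/

section ExactPenalty

variable {α : Type*} {S : Set α} {J p : α → ℝ} {c : ℝ} {x : α}

theorem IsMinOn.penalty_le_of_div_le {y z : α} {ε : ℝ}
    (hx : IsMinOn (fun V => J V + c * p V) S x) (hy : y ∈ S) (hpy : p y = 0)
    (hz : J z ≤ J x) (hc : 0 < c) (hε : (J y - J z) / c ≤ ε) :
    p x ≤ ε := by
  have hxy : J x + c * p x ≤ J y := by simpa [hpy] using hx hy
  rw [div_le_iff₀ hc] at hε
  have : c * p x ≤ c * ε := by linarith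
  exact le_of_mul_le_mul_left this hc

theorem IsMinOn.le_of_penalty_eq_zero {y : α}
    (hx : IsMinOn (fun V => J V + c * p V) S x) (hc : 0 ≤ c) (hpx : 0 ≤ p x)
    (hy : y ∈ S) (hpy : p y = 0) :
    J x ≤ J y := by
  have hxy : J x + c * p x ≤ J y := by simpa [hpy] using hx hy
  linarith [mul_nonneg hc hpx]

end ExactPenalty

theorem Matrix.PosSemidef.kyFan_le_trace {d : ℕ} (r : ℕ) {U : Matrix (Fin d) (Fin d) ℝ}
    (hU : U.PosSemidef) : kyFan r U ≤ U.trace := by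
  have htrace : U.trace = ∑ i, hU.1.eigenvalues i := by
    simpa using hU.1.trace_eq_sum_eigenvalues
  rw [kyFan, dif_pos hU.1, htrace]
  apply Real.sSup_le
  · rintro x ⟨s, -, rfl⟩
    calc ∑ i ∈ s, |hU.1.eigenvalues i| = ∑ i ∈ s, hU.1.eigenvalues i :=
          Finset.sum_congr rfl fun i _ => abs_of_nonneg (hU.eigenvalues_nonneg i)
      _ ≤ ∑ i, hU.1.eigenvalues i :=
          Finset.sum_le_sum_of_subset_of_nonneg (Finset.subset_univ s)
            fun i _ _ => hU.eigenvalues_nonneg i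
  · exact Finset.sum_nonneg fun i _ => hU.eigenvalues_nonneg i

theorem stmt5_general {d r : ℕ} (J : Matrix (Fin d) (Fin d) ℝ → ℝ)
    (ε c : ℝ) (hc : 0 < c)
    (Uhat : Matrix (Fin d) (Fin d) ℝ)
    (hUhatmin : ∀ V : Matrix (Fin d) (Fin d) ℝ, V.PosSemidef → J Uhat ≤ J V)
    (Ur : Matrix (Fin d) (Fin d) ℝ) (hUr : Ur.PosSemidef)
    (hUrfeas : Ur.trace - kyFan r Ur = 0)
    (hcchoice : (J Ur - J Uhat) / c ≤ ε)
    (Uc : Matrix (Fin d) (Fin d) ℝ) (hUcpsd : Uc.PosSemidef)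
    (hUcmin : ∀ V : Matrix (Fin d) (Fin d) ℝ, V.PosSemidef →
      J Uc + c * (Uc.trace - kyFan r Uc) ≤ J V + c * (V.trace - kyFan r V))
    (Ustar : Matrix (Fin d) (Fin d) ℝ) (hUstarpsd : Ustar.PosSemidef)
    (hUstarfeas : Ustar.trace - kyFan r Ustar = 0) :
    Uc.trace - kyFan r Uc ≤ ε ∧ J Uc ≤ J Ustar := by
  have hmin : IsMinOn (fun V => J V + c * (V.trace - kyFan r V)) {V | V.PosSemidef} Uc :=
    fun V hV => hUcmin V hV
  have hpen : 0 ≤ Uc.trace - kyFan r Uc := sub_nonneg.mpr (hUcpsd.kyFan_le_trace r)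
  exact ⟨hmin.penalty_le_of_div_le hUr hUrfeas (hUhatmin Uc hUcpsd) hc hcchoice,
    hmin.le_of_penalty_eq_zero hc.le hpen hUstarpsd hUstarfeas⟩

/-- Exact penalty bound: if `(J(U_r) - J(Û*))/c ≤ ε`, then any global minimizer `U*_c` of
the penalized problem satisfies `⟨U*_c,I⟩ - ‖U*_c‖_(r) ≤ ε` and `J(U*_c) ≤ J(U*)`. -/
theorem stmt5 {d r : ℕ} (J : Matrix (Fin d) (Fin d) ℝ → ℝ)
    (ε c : ℝ) (hε : 0 < ε) (hc : 0 < c)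
    (Uhat : Matrix (Fin d) (Fin d) ℝ) (hUhat : Uhat.PosSemidef)
    (hUhatmin : ∀ V : Matrix (Fin d) (Fin d) ℝ, V.PosSemidef → J Uhat ≤ J V)
    (Ur : Matrix (Fin d) (Fin d) ℝ) (hUr : Ur.PosSemidef)
    (hUrfeas : Ur.trace - kyFan r Ur = 0)
    (hcchoice : (J Ur - J Uhat) / c ≤ ε)
    (Uc : Matrix (Fin d) (Fin d) ℝ) (hUcpsd : Uc.PosSemidef)
    (hUcmin : ∀ V : Matrix (Fin d) (Fin d) ℝ, V.PosSemidef →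
      J Uc + c * (Uc.trace - kyFan r Uc) ≤ J V + c * (V.trace - kyFan r V))
    (Ustar : Matrix (Fin d) (Fin d) ℝ) (hUstarpsd : Ustar.PosSemidef)
    (hUstarfeas : Ustar.trace - kyFan r Ustar = 0)
    (hUstarmin : ∀ V : Matrix (Fin d) (Fin d) ℝ, V.PosSemidef →
      V.trace - kyFan r V = 0 → J Ustar ≤ J V) :
    Uc.trace - kyFan r Uc ≤ ε ∧ J Uc ≤ J Ustar :=
  stmt5_general J ε c hc Uhat hUhatmin Ur hUr hUrfeas hcchoice Uc hUcpsd hUcmin Ustar hUstarpsd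
    hUstarfeas
end

section
/- Let f₁, f₂ : S^d → ℝ with f₂ convex, let α > 0, 0 < κ < 1, and suppose U^{k+1} minimizes f₁(U) − ⟨U, W^k⟩ + δ_{S^d_+}(U) + (α/2)‖U − U^k‖_F² − ⟨Δ^{k+1}, U⟩ over S^d with W^k ∈ ∂f₂(U^k), U^k ∈ S^d_+, and ‖Δ^{k+1}‖_F ≤ ((1−κ)α/2)‖U^{k+1} − U^k‖_F. Then (κα/2)‖U^{k+1} − U^k‖_F² ≤ [f₁(U^k) − f₂(U^k)] − [f₁(U^{k+1}) − f₂(U^{k+1})]. -/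
open Matrix

noncomputable def frobInner {d m : ℕ} (A B : Matrix (Fin d) (Fin m) ℝ) : ℝ :=
  ∑ i, ∑ j, A i j * B i j

noncomputable def frobNorm {d m : ℕ} (A : Matrix (Fin d) (Fin m) ℝ) : ℝ :=
  Real.sqrt (∑ i, ∑ j, (A i j) ^ 2)

/-!
Test the minimality of `U^{k+1}` against the feasible point `U^k`: this bounds
`f₁(U^{k+1}) - f₁(U^k)` by `⟨W^k, U^{k+1} - U^k⟩ + ⟨Δ^{k+1}, U^{k+1} - U^k⟩ - (α/2)‖U^{k+1} - U^k‖²`.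
The subgradient inequality bounds the first inner product by `f₂(U^{k+1}) - f₂(U^k)`, and
Cauchy–Schwarz with the tolerance on `Δ^{k+1}` bounds the second by `((1-κ)α/2)‖U^{k+1} - U^k‖²`,
which leaves a decrease of `(κα/2)‖U^{k+1} - U^k‖²`.
-/

section Frobenius

variable {d m : ℕ}

lemma frobNorm_nonneg (A : Matrix (Fin d) (Fin m) ℝ) : 0 ≤ frobNorm A :=
  Real.sqrt_nonneg _

lemma frobNorm_zero : frobNorm (0 : Matrix (Fin d) (Fin m) ℝ) = 0 := by
  simp [frobNorm]

lemma frobInner_comm (A B : Matrix (Fin d) (Fin m) ℝ) : frobInner A B = frobInner B A := by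
  simp only [frobInner, mul_comm]

lemma frobInner_sub_right (A B C : Matrix (Fin d) (Fin m) ℝ) :
    frobInner A (B - C) = frobInner A B - frobInner A C := by
  simp [frobInner, mul_sub, Finset.sum_sub_distrib]

lemma frobInner_le_frobNorm_mul_frobNorm (A B : Matrix (Fin d) (Fin m) ℝ) :
    frobInner A B ≤ frobNorm A * frobNorm B := by
  simp only [frobInner, frobNorm, ← Fintype.sum_prod_type']
  exact Real.sum_mul_le_sqrt_mul_sqrt _ _ _

lemma frobInner_le_of_frobNorm_le {A B : Matrix (Fin d) (Fin m) ℝ} {c : ℝ}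
    (hA : frobNorm A ≤ c * frobNorm B) : frobInner A B ≤ c * frobNorm B ^ 2 :=
  calc frobInner A B ≤ frobNorm A * frobNorm B := frobInner_le_frobNorm_mul_frobNorm A B
    _ ≤ c * frobNorm B * frobNorm B := by gcongr; exact frobNorm_nonneg B
    _ = c * frobNorm B ^ 2 := by ring

end Frobenius

theorem stmt8_general {d : ℕ} (f₁ f₂ : Matrix (Fin d) (Fin d) ℝ → ℝ)
    (α κ : ℝ)
    (Uk Uk1 Wk Δ : Matrix (Fin d) (Fin d) ℝ)
    (hUk : Uk.PosSemidef)
    (hWk : ∀ V : Matrix (Fin d) (Fin d) ℝ, f₂ V ≥ f₂ Uk + frobInner Wk (V - Uk))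
    (hmin : ∀ V : Matrix (Fin d) (Fin d) ℝ, V.PosSemidef →
      f₁ Uk1 - frobInner Uk1 Wk + α / 2 * frobNorm (Uk1 - Uk) ^ 2 - frobInner Δ Uk1 ≤
        f₁ V - frobInner V Wk + α / 2 * frobNorm (V - Uk) ^ 2 - frobInner Δ V)
    (hΔ : frobNorm Δ ≤ (1 - κ) * α / 2 * frobNorm (Uk1 - Uk)) :
    κ * α / 2 * frobNorm (Uk1 - Uk) ^ 2 ≤ (f₁ Uk - f₂ Uk) - (f₁ Uk1 - f₂ Uk1) := by
  have hprox := hmin Uk hUk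
  rw [sub_self, frobNorm_zero] at hprox
  have hsubgrad : frobInner Uk1 Wk - frobInner Uk Wk ≤ f₂ Uk1 - f₂ Uk := by
    have := hWk Uk1
    rw [frobInner_sub_right, frobInner_comm Wk, frobInner_comm Wk] at this
    linarith
  have herror : frobInner Δ Uk1 - frobInner Δ Uk ≤ (1 - κ) * α / 2 * frobNorm (Uk1 - Uk) ^ 2 := by
    rw [← frobInner_sub_right]
    exact frobInner_le_of_frobNorm_le hΔ
  linarith

/-- Sufficient descent for the inexact proximal DC step: if `U^{k+1}` minimizes the
inexact proximal subproblem over the PSD cone, `W^k ∈ ∂f₂(U^k)` and the inexact term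
satisfies `‖Δ^{k+1}‖_F ≤ ((1-κ)α/2)‖U^{k+1} - U^k‖_F`, then
`(κα/2)‖U^{k+1} - U^k‖_F² ≤ (f₁(U^k) - f₂(U^k)) - (f₁(U^{k+1}) - f₂(U^{k+1}))`. -/
theorem stmt8 {d : ℕ} (f₁ f₂ : Matrix (Fin d) (Fin d) ℝ → ℝ)
    (hf₂ : ConvexOn ℝ Set.univ f₂)
    (α κ : ℝ) (hα : 0 < α) (hκ0 : 0 < κ) (hκ1 : κ < 1)
    (Uk Uk1 Wk Δ : Matrix (Fin d) (Fin d) ℝ)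
    (hUk : Uk.PosSemidef) (hUk1 : Uk1.PosSemidef)
    (hWk : ∀ V : Matrix (Fin d) (Fin d) ℝ, f₂ V ≥ f₂ Uk + frobInner Wk (V - Uk))
    (hmin : ∀ V : Matrix (Fin d) (Fin d) ℝ, V.PosSemidef →
      f₁ Uk1 - frobInner Uk1 Wk + α / 2 * frobNorm (Uk1 - Uk) ^ 2 - frobInner Δ Uk1 ≤
        f₁ V - frobInner V Wk + α / 2 * frobNorm (V - Uk) ^ 2 - frobInner Δ V)
    (hΔ : frobNorm Δ ≤ (1 - κ) * α / 2 * frobNorm (Uk1 - Uk)) :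
    κ * α / 2 * frobNorm (Uk1 - Uk) ^ 2 ≤ (f₁ Uk - f₂ Uk) - (f₁ Uk1 - f₂ Uk1) :=
  stmt8_general f₁ f₂ α κ Uk Uk1 Wk Δ hUk hWk hmin hΔ
end
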